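/- Let n ≥ 4 or n = ∞, let ε be a central extension of StU(2n,R,𝔏) satisfying property (†), and for i ∈ Ω, j ∈ Ω∖{±i}, a ∈ R set S_ij(a) = [ε⁻¹X_il(a), ε⁻¹X_lj(1)] for any l ∈ Ω∖{±i,±j} (this does not depend on the choice of l). Then S_ij(a)·S_ij(b) = S_ij(a+b) for all a, b ∈ R; moreover S_ij(a) = S_{−j,−i}(ε_{−j}·ā·ε_i). -/

import Mathlib

open MulOpposite
open scoped commutatorElement

universe u

/-- A pseudo-involution on a ring `R`: an additive map `a ↦ ā` such that `1̄` is
invertible (with explicit inverse `e = 1̄⁻¹`), `ā̄ = a` and `(ab)‾ = b̄·1̄⁻¹·ā`. -/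
structure PseudoInvolution (R : Type*) [Ring R] where
  bar : R → R
  bar_add : ∀ a b : R, bar (a + b) = bar a + bar b
  e : R
  e_bar_one : e * bar 1 = 1
  bar_one_e : bar 1 * e = 1
  bar_bar : ∀ a : R, bar (bar a) = a
  bar_mul : ∀ a b : R, bar (a * b) = bar b * e * bar a

/-- An anti-Hermitian form on a right `R`-module `V` (a right module is encoded as a
module over the opposite ring, so `u·a` is `op a • u`). -/
structure AntiHermitianForm (R : Type*) [Ring R] (pi : PseudoInvolution R)
    (V : Type*) [AddCommGroup V] [Module Rᵐᵒᵖ V] where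
  B : V → V → R
  add_left : ∀ u v w : V, B (u + v) w = B u w + B v w
  add_right : ∀ u v w : V, B u (v + w) = B u v + B u w
  smul_pair : ∀ (a b : R) (u v : V), B (op a • u) (op b • v) = pi.bar a * pi.e * B u v * b
  skew : ∀ u v : V, B u v = - pi.bar (B v u)

variable {R : Type u} [Ring R] {pi : PseudoInvolution R}
variable {V : Type u} [AddCommGroup V] [Module Rᵐᵒᵖ V]

/-- The Heisenberg group operation `(u,a) ∔ (v,b) = (u+v, a+b+B(u,v))`. -/
def hAdd (f : AntiHermitianForm R pi V) (x y : V × R) : V × R :=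
  (x.1 + y.1, x.2 + y.2 + f.B x.1 y.1)

/-- The Heisenberg group inverse `∸(u,a) = (−u, −a+B(u,u))`. -/
def hInv (f : AntiHermitianForm R pi V) (x : V × R) : V × R :=
  (-x.1, -x.2 + f.B x.1 x.1)

/-- The right action of `R` on the Heisenberg group, `(u,a) ↼ b = (ub, b̄·1̄⁻¹·a·b)`. -/
def hAct (pi : PseudoInvolution R) (x : V × R) (b : R) : V × R :=
  (op b • x.1, pi.bar b * pi.e * x.2 * b)

/-- An odd form parameter: a subgroup of the Heisenberg group, stable under the
`R`-action, lying between `𝔏_min` and `𝔏_max`. -/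
structure OddFormParameter (f : AntiHermitianForm R pi V) where
  carrier : Set (V × R)
  add_mem : ∀ x y : V × R, x ∈ carrier → y ∈ carrier → hAdd f x y ∈ carrier
  inv_mem : ∀ x : V × R, x ∈ carrier → hInv f x ∈ carrier
  act_mem : ∀ x : V × R, x ∈ carrier → ∀ b : R, hAct pi x b ∈ carrier
  min_le : ∀ a : R, ((0 : V), a + pi.bar a) ∈ carrier
  le_max : ∀ x : V × R, x ∈ carrier → x.2 = pi.bar x.2 + f.B x.1 x.1

/-- The index set `Ω = {1,…,n,−n,…,−1}` (for `n = ∞` all nonzero integers). -/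
def Omega (n : ℕ∞) : Set ℤ := {i : ℤ | i ≠ 0 ∧ (i.natAbs : ℕ∞) ≤ n}

/-- `ε_i = 1̄⁻¹` for `i > 0` and `ε_i = −1` for `i < 0`. -/
def epsI (pi : PseudoInvolution R) (i : ℤ) : R := if 0 < i then pi.e else -1

/-- A family of "Steinberg generators" in a group `G` satisfying Petrov's relations
R0–R9 of the odd unitary Steinberg group `StU(2n, R, 𝔏)`. -/
structure StURels (n : ℕ∞) (f : AntiHermitianForm R pi V) (L : OddFormParameter f)
    (G : Type*) [Group G] where
  X : ℤ → ℤ → R → G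
  Y : ℤ → V × R → G
  rel0 : ∀ i j : ℤ, i ∈ Omega n → j ∈ Omega n → j ≠ i → j ≠ -i → ∀ a : R,
    X i j a = X (-j) (-i) (epsI pi (-j) * pi.bar a * epsI pi i)
  rel1 : ∀ i j : ℤ, i ∈ Omega n → j ∈ Omega n → j ≠ i → j ≠ -i → ∀ a b : R,
    X i j a * X i j b = X i j (a + b)
  rel2 : ∀ i : ℤ, i ∈ Omega n → ∀ ξ ζ : V × R, ξ ∈ L.carrier → ζ ∈ L.carrier →
    Y i ξ * Y i ζ = Y i (hAdd f ξ ζ)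
  rel3 : ∀ i j h k : ℤ, i ∈ Omega n → j ∈ Omega n → h ∈ Omega n → k ∈ Omega n →
    j ≠ i → j ≠ -i → k ≠ h → k ≠ -h → h ≠ j → h ≠ -i → k ≠ i → k ≠ -j →
    ∀ a b : R, ⁅X i j a, X h k b⁆ = 1
  rel4 : ∀ i j k : ℤ, i ∈ Omega n → j ∈ Omega n → k ∈ Omega n → k ≠ j → k ≠ -j →
    j ≠ -i → k ≠ i → ∀ ξ : V × R, ξ ∈ L.carrier → ∀ a : R, ⁅Y i ξ, X j k a⁆ = 1
  rel5 : ∀ i j k : ℤ, i ∈ Omega n → j ∈ Omega n → k ∈ Omega n →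
    j ≠ i → j ≠ -i → k ≠ j → k ≠ -j → k ≠ i → k ≠ -i →
    ∀ a b : R, ⁅X i j a, X j k b⁆ = X i k (a * b)
  rel6 : ∀ i j : ℤ, i ∈ Omega n → j ∈ Omega n → j ≠ i → j ≠ -i →
    ∀ (u : V) (a : R) (v : V) (b : R), (u, a) ∈ L.carrier → (v, b) ∈ L.carrier →
    ⁅Y i (u, a), Y j (v, b)⁆ = X i (-j) (epsI pi i * f.B u v)
  rel7 : ∀ i : ℤ, i ∈ Omega n →
    ∀ (u : V) (a : R) (v : V) (b : R), (u, a) ∈ L.carrier → (v, b) ∈ L.carrier →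
    ⁅Y i (u, a), Y i (v, b)⁆ = Y i (0, f.B u v - f.B v u)
  rel8 : ∀ i j : ℤ, i ∈ Omega n → j ∈ Omega n → j ≠ i → j ≠ -i →
    ∀ (u : V) (a : R), (u, a) ∈ L.carrier → ∀ b : R,
    ⁅Y i (u, a), X (-i) j b⁆ = X i j (epsI pi i * a * b) * Y (-j) (hAct pi (u, -pi.bar a) b)
  rel9 : ∀ i j : ℤ, i ∈ Omega n → j ∈ Omega n → j ≠ i → j ≠ -i → ∀ a b : R,
    ⁅X i j a, X j (-i) b⁆ =
      Y i (0, -(epsI pi (-i)) * pi.bar 1 * a * b + pi.bar b * pi.e * pi.bar a * epsI pi i)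

/-- `(G, S)` *is* the odd unitary Steinberg group `StU(2n, R, 𝔏)`: it has the universal
property of the presentation, i.e. for every group `H` with Steinberg generators
satisfying R0–R9 there is a unique homomorphism `G →* H` matching the generators. -/
def IsStU {n : ℕ∞} {f : AntiHermitianForm R pi V} {L : OddFormParameter f}
    {G : Type u} [Group G] (S : StURels n f L G) : Prop :=
  ∀ (H : Type u) [Group H], ∀ T : StURels n f L H,
    ∃! φ : G →* H,
      (∀ i j : ℤ, i ∈ Omega n → j ∈ Omega n → j ≠ i → j ≠ -i → ∀ a : R,
        φ (S.X i j a) = T.X i j a) ∧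
      (∀ i : ℤ, i ∈ Omega n → ∀ ξ : V × R, ξ ∈ L.carrier → φ (S.Y i ξ) = T.Y i ξ)

/-- A central extension: a surjective group homomorphism whose kernel is central. -/
structure IsCentralExtension {H : Type*} {G : Type*} [Group H] [Group G]
    (ε : H →* G) : Prop where
  surjective : Function.Surjective ε
  central : ε.ker ≤ Subgroup.center H

/-- Property (†): preimages of `X_ij(a)` and `X_kh(b)` commute whenever the eight
indices `±i, ±j, ±k, ±h` are pairwise distinct. -/
def DaggerProp {n : ℕ∞} {f : AntiHermitianForm R pi V} {L : OddFormParameter f}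
    {G : Type u} [Group G] (S : StURels n f L G)
    {H : Type u} [Group H] (ε : H →* G) : Prop :=
  ∀ i j k h : ℤ, i ∈ Omega n → j ∈ Omega n → k ∈ Omega n → h ∈ Omega n →
    ({i, -i, j, -j, k, -k, h, -h} : Finset ℤ).card = 8 →
    ∀ a b : R, ∀ u v : H, ε u = S.X i j a → ε v = S.X k h b → ⁅u, v⁆ = 1


/-!
All computations take place in `H` through the Steinberg central trick: a commutator of
preimages depends only on the images. Since `n ≥ 4` there is always an index `l'` outside
`±i, ±j, ±l`. Writing `X_lj(b) = [X_ll'(b), X_l'j(1)]`, property (†) makes `ε⁻¹X_il(a)`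
commute with `ε⁻¹X_l'j(1)`, and a commutator identity turns `[ε⁻¹X_il(a), ε⁻¹X_lj(b)]`
into `[ε⁻¹X_il'(ab), ε⁻¹X_l'j(1)]`; this gives independence of the auxiliary index.
For additivity, `ε⁻¹X_il(b)` commutes with `S_ij(a)` computed through `l'`, so the expansion of
`[xy, z]` splits `S_ij(a + b)`. For symmetry, R0 rewrites the two factors of `S_ij(a)` as
generators `X_{-l,-i}` and `X_{-j,-l}`, swapping them inverts the commutator, and
`1̄·ε_l·ε_{-l} = -1` identifies the result with
`S_{-j,-i}(-ε_{-j}·ā·ε_i)⁻¹ = S_{-j,-i}(ε_{-j}·ā·ε_i)`.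
-/

section CentralCommutators

variable {H : Type*} [Group H]

lemma commutatorElement_mul_left_of_mem_center {z : H} (hz : z ∈ Subgroup.center H)
    (u w : H) : ⁅z * u, w⁆ = ⁅u, w⁆ := by
  calc ⁅z * u, w⁆ = z * (u * w * u⁻¹) * z⁻¹ * w⁻¹ := by group
    _ = ⁅u, w⁆ := by
        rw [← Subgroup.mem_center_iff.mp hz, mul_inv_cancel_right, commutatorElement_def]

lemma commutatorElement_mul_right_of_mem_center {z : H} (hz : z ∈ Subgroup.center H)
    (u w : H) : ⁅u, z * w⁆ = ⁅u, w⁆ := by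
  rw [← commutatorElement_inv, commutatorElement_mul_left_of_mem_center hz, commutatorElement_inv]

lemma commutatorElement_eq_of_map_eq {G : Type*} [Group G] {ε : H →* G}
    (hε : ε.ker ≤ Subgroup.center H) {u v u' v' : H} (hu : ε u = ε u') (hv : ε v = ε v') :
    ⁅u, v⁆ = ⁅u', v'⁆ := by
  have hcenter {x x' : H} (h : ε x = ε x') : x' * x⁻¹ ∈ Subgroup.center H :=
    hε (by rw [MonoidHom.mem_ker, map_mul, map_inv, h, mul_inv_cancel])
  calc ⁅u, v⁆ = ⁅u' * u⁻¹ * u, v' * v⁻¹ * v⁆ := by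
        rw [commutatorElement_mul_left_of_mem_center (hcenter hu),
          commutatorElement_mul_right_of_mem_center (hcenter hv)]
    _ = ⁅u', v'⁆ := by simp only [inv_mul_cancel_right]

lemma commutatorElement_commutatorElement_eq_one {b x y : H}
    (hx : ⁅b, x⁆ ∈ Subgroup.center H) (hy : ⁅b, y⁆ ∈ Subgroup.center H) :
    ⁅b, ⁅x, y⁆⁆ = 1 := by
  have hconj (g : H) : b * g * b⁻¹ = ⁅b, g⁆ * g := by group
  have hfix : b * ⁅x, y⁆ * b⁻¹ = ⁅x, y⁆ := by
    rw [conjugate_commutatorElement, hconj, hconj, commutatorElement_mul_left_of_mem_center hx,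
      commutatorElement_mul_right_of_mem_center hy]
  rw [commutatorElement_def, hfix, mul_inv_cancel]

lemma commutatorElement_assoc_of_commute {u s w : H} (huw : Commute u w)
    (hAB : Commute ⁅u, s⁆ ⁅s, w⁆) (hBw : ⁅⁅s, w⁆, w⁆ ∈ Subgroup.center H) :
    ⁅u, ⁅s, w⁆⁆ = ⁅⁅u, s⁆, w⁆ := by
  have hBAw : Commute ⁅s, w⁆ ⁅⁅u, s⁆, w⁆ := commutatorElement_eq_one_iff_commute.mp <|
    commutatorElement_commutatorElement_eq_one
      (by rw [hAB.symm.commutator_eq]; exact one_mem _) hBw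
  have hwu : u⁻¹ * w * u = w := by rw [huw.inv_left.eq, inv_mul_cancel_right]
  calc ⁅u, ⁅s, w⁆⁆ = ⁅u, ⁅s, w⁆ * w⁆ := by
        rw [commutatorElement_mul_right_eq_mul_conj, huw.commutator_eq, mul_one,
          mul_inv_cancel_right]
    _ = u * s * (u⁻¹ * w * u) * s⁻¹ * u⁻¹ * s * w⁻¹ * s⁻¹ := by rw [hwu]; group
    _ = ⁅⁅u, s⁆, ⁅s, w⁆ * w⁆ := by group
    _ = ⁅⁅u, s⁆, w⁆ := by
        rw [commutatorElement_mul_right_eq_mul_conj, hAB.commutator_eq, one_mul, hBAw.eq,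
          mul_inv_cancel_right]

end CentralCommutators

namespace IsCentralExtension

variable {H G : Type*} [Group H] [Group G] {ε : H →* G}

lemma commutatorElement_mem_center (hε : IsCentralExtension ε) {u v : H}
    (h : ⁅ε u, ε v⁆ = 1) : ⁅u, v⁆ ∈ Subgroup.center H :=
  hε.central (by rwa [MonoidHom.mem_ker, map_commutatorElement])

variable (hε : IsCentralExtension ε)

/-- The paper's `[ε⁻¹x, ε⁻¹y]`. -/
noncomputable def liftComm (x y : G) : H :=
  ⁅Function.surjInv hε.surjective x, Function.surjInv hε.surjective y⁆

lemma commutatorElement_eq_liftComm {u v : H} {x y : G} (hu : ε u = x) (hv : ε v = y) :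
    ⁅u, v⁆ = hε.liftComm x y :=
  commutatorElement_eq_of_map_eq hε.central (by rw [hu, Function.surjInv_eq hε.surjective])
    (by rw [hv, Function.surjInv_eq hε.surjective])

lemma liftComm_swap (x y : G) : hε.liftComm y x = (hε.liftComm x y)⁻¹ :=
  (commutatorElement_inv _ _).symm

lemma liftComm_one_left (y : G) : hε.liftComm 1 y = 1 := by
  obtain ⟨v, hv⟩ := hε.surjective y
  rw [← hε.commutatorElement_eq_liftComm (map_one ε) hv, commutatorElement_one_left]

end IsCentralExtension

lemma card_insert_neg_eq_eight {i j k h : ℤ} (hi : i ≠ 0) (hj : j ≠ 0) (hk : k ≠ 0) (hh : h ≠ 0)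
    (hij : i.natAbs ≠ j.natAbs) (hik : i.natAbs ≠ k.natAbs) (hih : i.natAbs ≠ h.natAbs)
    (hjk : j.natAbs ≠ k.natAbs) (hjh : j.natAbs ≠ h.natAbs) (hkh : k.natAbs ≠ h.natAbs) :
    ({i, -i, j, -j, k, -k, h, -h} : Finset ℤ).card = 8 := by
  repeat rw [Finset.card_insert_of_notMem
    (by simp only [Finset.mem_insert, Finset.mem_singleton]; omega)]
  rfl

lemma neg_mem_Omega {n : ℕ∞} {i : ℤ} (hi : i ∈ Omega n) : -i ∈ Omega n :=
  ⟨neg_ne_zero.mpr hi.1, by rw [Int.natAbs_neg]; exact hi.2⟩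

lemma exists_mem_Omega_natAbs_ne {n : ℕ∞} (hn : 4 ≤ n) (i j l : ℤ) :
    ∃ m ∈ Omega n, m.natAbs ≠ i.natAbs ∧ m.natAbs ≠ j.natAbs ∧ m.natAbs ≠ l.natAbs := by
  obtain ⟨m, hm, hmijl⟩ := Finset.exists_mem_notMem_of_card_lt_card
    (s := {i.natAbs, j.natAbs, l.natAbs}) (t := Finset.Icc 1 4)
    (Finset.card_le_three.trans_lt (by simp))
  simp only [Finset.mem_Icc, Finset.mem_insert, Finset.mem_singleton] at hm hmijl
  refine ⟨m, ⟨by omega, ?_⟩, by omega⟩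
  rw [Int.natAbs_natCast]
  exact le_trans (by exact_mod_cast hm.2) hn

lemma bar_one_mul_epsI_mul_epsI_neg {l : ℤ} (hl : l ≠ 0) :
    pi.bar 1 * (epsI pi l * epsI pi (-l)) = -1 := by
  unfold epsI
  split_ifs <;> first | omega | simp [pi.bar_one_e]

section Steinberg

variable {n : ℕ∞} {f : AntiHermitianForm R pi V} {L : OddFormParameter f}
  {G : Type u} [Group G] (S : StURels n f L G)
  {H : Type u} [Group H] {ε : H →* G} (hε : IsCentralExtension ε)

lemma StURels.X_zero {i j : ℤ} (hi : i ∈ Omega n) (hj : j ∈ Omega n) (hji : j ≠ i)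
    (hji' : j ≠ -i) : S.X i j 0 = 1 :=
  mul_eq_left.mp (by rw [S.rel1 i j hi hj hji hji' 0 0, add_zero])

lemma DaggerProp.commute (hdag : DaggerProp S ε) {i j k h : ℤ} (hi : i ∈ Omega n)
    (hj : j ∈ Omega n) (hk : k ∈ Omega n) (hh : h ∈ Omega n)
    (hij : i.natAbs ≠ j.natAbs) (hik : i.natAbs ≠ k.natAbs) (hih : i.natAbs ≠ h.natAbs)
    (hjk : j.natAbs ≠ k.natAbs) (hjh : j.natAbs ≠ h.natAbs) (hkh : k.natAbs ≠ h.natAbs)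
    {a b : R} {u v : H} (hu : ε u = S.X i j a) (hv : ε v = S.X k h b) : Commute u v :=
  commutatorElement_eq_one_iff_commute.mp <| hdag i j k h hi hj hk hh
    (card_insert_neg_eq_eight hi.1 hj.1 hk.1 hh.1 hij hik hih hjk hjh hkh) a b u v hu hv

/-- The paper's `S_ij(a)`, computed with the auxiliary index `l`. -/
noncomputable def liftS (i j l : ℤ) (a : R) : H := hε.liftComm (S.X i l a) (S.X l j 1)

lemma liftComm_X_X_eq_liftS (hdag : DaggerProp S ε) {i j l l' : ℤ} (hi : i ∈ Omega n)
    (hj : j ∈ Omega n) (hl : l ∈ Omega n) (hl' : l' ∈ Omega n)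
    (hij : i.natAbs ≠ j.natAbs) (hil : i.natAbs ≠ l.natAbs) (hil' : i.natAbs ≠ l'.natAbs)
    (hjl : j.natAbs ≠ l.natAbs) (hjl' : j.natAbs ≠ l'.natAbs) (hll' : l.natAbs ≠ l'.natAbs)
    (a b : R) : hε.liftComm (S.X i l a) (S.X l j b) = liftS S hε i j l' (a * b) := by
  have := hi.1; have := hj.1; have := hl.1; have := hl'.1
  obtain ⟨u, hu⟩ := hε.surjective (S.X i l a)
  obtain ⟨s, hs⟩ := hε.surjective (S.X l l' b)
  obtain ⟨w, hw⟩ := hε.surjective (S.X l' j 1)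
  have hA : ε ⁅u, s⁆ = S.X i l' (a * b) := by
    rw [map_commutatorElement, hu, hs, S.rel5 i l l' hi hl hl' (by omega) (by omega)
      (by omega) (by omega) (by omega) (by omega)]
  have hB : ε ⁅s, w⁆ = S.X l j b := by
    rw [map_commutatorElement, hs, hw, S.rel5 l l' j hl hl' hj (by omega) (by omega)
      (by omega) (by omega) (by omega) (by omega), mul_one]
  have huw : Commute u w :=
    hdag.commute S hi hl hl' hj hil hil' hij hll' hjl.symm hjl'.symm hu hw
  have hAB : Commute ⁅u, s⁆ ⁅s, w⁆ :=
    hdag.commute S hi hl' hl hj hil' hil hij hll'.symm hjl'.symm hjl.symm hA hB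
  have hBw : ⁅⁅s, w⁆, w⁆ ∈ Subgroup.center H := hε.commutatorElement_mem_center <| by
    rw [hB, hw, S.rel3 l j l' j hl hj hl' hj (by omega) (by omega) (by omega) (by omega)
      (by omega) (by omega) (by omega) (by omega)]
  rw [← hε.commutatorElement_eq_liftComm hu hB, commutatorElement_assoc_of_commute huw hAB hBw]
  exact hε.commutatorElement_eq_liftComm hA hw

lemma liftS_eq_liftS (hn : 4 ≤ n) (hdag : DaggerProp S ε) {i j l l' : ℤ} (hi : i ∈ Omega n)
    (hj : j ∈ Omega n) (hl : l ∈ Omega n) (hl' : l' ∈ Omega n)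
    (hij : i.natAbs ≠ j.natAbs) (hil : i.natAbs ≠ l.natAbs) (hil' : i.natAbs ≠ l'.natAbs)
    (hjl : j.natAbs ≠ l.natAbs) (hjl' : j.natAbs ≠ l'.natAbs) (a : R) :
    liftS S hε i j l a = liftS S hε i j l' a := by
  have hstep {l l' : ℤ} (hl : l ∈ Omega n) (hl' : l' ∈ Omega n) (hil : i.natAbs ≠ l.natAbs)
      (hil' : i.natAbs ≠ l'.natAbs) (hjl : j.natAbs ≠ l.natAbs) (hjl' : j.natAbs ≠ l'.natAbs)
      (hll' : l.natAbs ≠ l'.natAbs) : liftS S hε i j l a = liftS S hε i j l' a := by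
    have h := liftComm_X_X_eq_liftS S hε hdag hi hj hl hl' hij hil hil' hjl hjl' hll' a 1
    rwa [mul_one] at h
  obtain ⟨m, hm, hmi, hmj, hml⟩ := exists_mem_Omega_natAbs_ne hn i j l
  by_cases hll' : l.natAbs = l'.natAbs
  · rw [hstep hl hm hil hmi.symm hjl hmj.symm hml.symm,
      hstep hl' hm hil' hmi.symm hjl' hmj.symm (hll' ▸ hml.symm)]
  · exact hstep hl hl' hil hil' hjl hjl' hll'

lemma liftS_add (hn : 4 ≤ n) (hdag : DaggerProp S ε) {i j l : ℤ} (hi : i ∈ Omega n)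
    (hj : j ∈ Omega n) (hl : l ∈ Omega n) (hij : i.natAbs ≠ j.natAbs)
    (hil : i.natAbs ≠ l.natAbs) (hjl : j.natAbs ≠ l.natAbs) (a b : R) :
    liftS S hε i j l a * liftS S hε i j l b = liftS S hε i j l (a + b) := by
  have := hi.1; have := hj.1; have := hl.1
  obtain ⟨l', hl', hl'i, hl'j, hl'l⟩ := exists_mem_Omega_natAbs_ne hn i j l
  obtain ⟨ua, hua⟩ := hε.surjective (S.X i l a)
  obtain ⟨ub, hub⟩ := hε.surjective (S.X i l b)
  obtain ⟨v, hv⟩ := hε.surjective (S.X l j 1)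
  obtain ⟨u', hu'⟩ := hε.surjective (S.X i l' a)
  obtain ⟨v', hv'⟩ := hε.surjective (S.X l' j 1)
  have hSa : ⁅ua, v⁆ = ⁅u', v'⁆ := by
    rw [hε.commutatorElement_eq_liftComm hua hv, hε.commutatorElement_eq_liftComm hu' hv']
    exact liftS_eq_liftS S hε hn hdag hi hj hl hl' hij hil hl'i.symm hjl hl'j.symm a
  have hcomm : Commute ub ⁅ua, v⁆ := by
    rw [hSa]
    refine commutatorElement_eq_one_iff_commute.mp
      (commutatorElement_commutatorElement_eq_one ?_ ?_)
    · exact hε.commutatorElement_mem_center (by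
        rw [hub, hu', S.rel3 i l i l' hi hl hi hl' (by omega) (by omega) (by omega) (by omega)
          (by omega) (by omega) (by omega) (by omega)])
    · rw [(hdag.commute S hi hl hl' hj hil hl'i.symm hij hl'l.symm hjl.symm hl'j hub
        hv').commutator_eq]
      exact one_mem _
  have hmul : ε (ub * ua) = S.X i l (a + b) := by
    rw [map_mul, hub, hua, S.rel1 i l hi hl (by omega) (by omega), add_comm]
  calc liftS S hε i j l a * liftS S hε i j l b = ⁅ua, v⁆ * ⁅ub, v⁆ := by
        rw [hε.commutatorElement_eq_liftComm hua hv, hε.commutatorElement_eq_liftComm hub hv]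
        rfl
    _ = ub * ⁅ua, v⁆ * ub⁻¹ * ⁅ub, v⁆ := by rw [hcomm.eq, mul_inv_cancel_right]
    _ = liftS S hε i j l (a + b) := by
        rw [← commutatorElement_mul_left_eq_conj_mul, hε.commutatorElement_eq_liftComm hmul hv]
        rfl

lemma liftS_neg (hn : 4 ≤ n) (hdag : DaggerProp S ε) {i j l : ℤ} (hi : i ∈ Omega n)
    (hj : j ∈ Omega n) (hl : l ∈ Omega n) (hij : i.natAbs ≠ j.natAbs)
    (hil : i.natAbs ≠ l.natAbs) (hjl : j.natAbs ≠ l.natAbs) (a : R) :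
    liftS S hε i j l (-a) = (liftS S hε i j l a)⁻¹ := by
  have := hi.1; have := hj.1; have := hl.1
  refine eq_inv_of_mul_eq_one_left ?_
  rw [liftS_add S hε hn hdag hi hj hl hij hil hjl, neg_add_cancel, liftS,
    S.X_zero hi hl (by omega) (by omega), hε.liftComm_one_left]

lemma liftS_eq_liftS_neg (hn : 4 ≤ n) (hdag : DaggerProp S ε) {i j l m : ℤ}
    (hi : i ∈ Omega n) (hj : j ∈ Omega n) (hl : l ∈ Omega n) (hm : m ∈ Omega n)
    (hij : i.natAbs ≠ j.natAbs) (hil : i.natAbs ≠ l.natAbs) (hjl : j.natAbs ≠ l.natAbs)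
    (him : i.natAbs ≠ m.natAbs) (hjm : j.natAbs ≠ m.natAbs) (a : R) :
    liftS S hε i j l a = liftS S hε (-j) (-i) m (epsI pi (-j) * pi.bar a * epsI pi i) := by
  have hR0 : liftS S hε i j l a =
      (hε.liftComm (S.X (-j) (-l) (epsI pi (-j) * pi.bar 1 * epsI pi l))
        (S.X (-l) (-i) (epsI pi (-l) * pi.bar a * epsI pi i)))⁻¹ := by
    have := hi.1; have := hj.1; have := hl.1
    rw [← hε.liftComm_swap, liftS, S.rel0 i l hi hl (by omega) (by omega) a,
      S.rel0 l j hl hj (by omega) (by omega) 1]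
  have hprod : (epsI pi (-j) * pi.bar 1 * epsI pi l) * (epsI pi (-l) * pi.bar a * epsI pi i) =
      -(epsI pi (-j) * pi.bar a * epsI pi i) := by
    calc _ = epsI pi (-j) * (pi.bar 1 * (epsI pi l * epsI pi (-l))) * (pi.bar a * epsI pi i) :=
          by noncomm_ring
      _ = _ := by rw [bar_one_mul_epsI_mul_epsI_neg hl.1]; noncomm_ring
  obtain ⟨m', hm', hm'i, hm'j, hm'l⟩ := exists_mem_Omega_natAbs_ne hn i j l
  rw [hR0, liftComm_X_X_eq_liftS S hε hdag (neg_mem_Omega hj) (neg_mem_Omega hi)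
      (neg_mem_Omega hl) hm' (by simpa using hij.symm) (by simpa using hjl)
      (by simpa using hm'j.symm) (by simpa using hil) (by simpa using hm'i.symm)
      (by simpa using hm'l.symm), hprod,
    liftS_neg S hε hn hdag (neg_mem_Omega hj) (neg_mem_Omega hi) hm' (by simpa using hij.symm)
      (by simpa using hm'j.symm) (by simpa using hm'i.symm), inv_inv]
  exact liftS_eq_liftS S hε hn hdag (neg_mem_Omega hj) (neg_mem_Omega hi) hm' hm
    (by simpa using hij.symm) (by simpa using hm'j.symm) (by simpa using hjm)
    (by simpa using hm'i.symm) (by simpa using him) _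

end Steinberg

theorem S_additive_and_symmetric_general (f : AntiHermitianForm R pi V)
    (L : OddFormParameter f) (n : ℕ∞) (hn : 4 ≤ n)
    {G : Type u} [Group G] (S : StURels n f L G)
    {H : Type u} [Group H] (ε : H →* G) (hε : IsCentralExtension ε)
    (hdag : DaggerProp S ε) :
    ∀ i j : ℤ, i ∈ Omega n → j ∈ Omega n → j ≠ i → j ≠ -i →
      (∀ l l' : ℤ, l ∈ Omega n → l' ∈ Omega n →
        l ≠ i → l ≠ -i → l ≠ j → l ≠ -j → l' ≠ i → l' ≠ -i → l' ≠ j → l' ≠ -j →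
        ∀ a : R, ∀ u v u' v' : H,
          ε u = S.X i l a → ε v = S.X l j 1 →
          ε u' = S.X i l' a → ε v' = S.X l' j 1 →
          ⁅u, v⁆ = ⁅u', v'⁆) ∧
      (∀ l : ℤ, l ∈ Omega n → l ≠ i → l ≠ -i → l ≠ j → l ≠ -j →
        ∀ a b : R, ∀ ua va ub vb uc vc : H,
          ε ua = S.X i l a → ε va = S.X l j 1 →
          ε ub = S.X i l b → ε vb = S.X l j 1 →
          ε uc = S.X i l (a + b) → ε vc = S.X l j 1 →
          ⁅ua, va⁆ * ⁅ub, vb⁆ = ⁅uc, vc⁆) ∧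
      (∀ l m : ℤ, l ∈ Omega n → m ∈ Omega n →
        l ≠ i → l ≠ -i → l ≠ j → l ≠ -j → m ≠ i → m ≠ -i → m ≠ j → m ≠ -j →
        ∀ a : R, ∀ u v u' v' : H,
          ε u = S.X i l a → ε v = S.X l j 1 →
          ε u' = S.X (-j) m (epsI pi (-j) * pi.bar a * epsI pi i) →
          ε v' = S.X m (-i) 1 →
          ⁅u, v⁆ = ⁅u', v'⁆) := by
  intro i j hi hj hji hji'
  have hij : i.natAbs ≠ j.natAbs := by omega
  refine ⟨?_, ?_, ?_⟩
  · intro l l' hl hl' _ _ _ _ _ _ _ _ a u v u' v' hu hv hu' hv'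
    rw [hε.commutatorElement_eq_liftComm hu hv, hε.commutatorElement_eq_liftComm hu' hv']
    exact liftS_eq_liftS S hε hn hdag hi hj hl hl' hij (by omega) (by omega) (by omega)
      (by omega) a
  · intro l hl _ _ _ _ a b ua va ub vb uc vc hua hva hub hvb huc hvc
    rw [hε.commutatorElement_eq_liftComm hua hva, hε.commutatorElement_eq_liftComm hub hvb,
      hε.commutatorElement_eq_liftComm huc hvc]
    exact liftS_add S hε hn hdag hi hj hl hij (by omega) (by omega) a b
  · intro l m hl hm _ _ _ _ _ _ _ _ a u v u' v' hu hv hu' hv'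
    rw [hε.commutatorElement_eq_liftComm hu hv, hε.commutatorElement_eq_liftComm hu' hv']
    exact liftS_eq_liftS_neg S hε hn hdag hi hj hl hm hij (by omega) (by omega) (by omega)
      (by omega) a

/-- For `n ≥ 4` and a central extension `ε` of `StU(2n,R,𝔏)` with property (†), the
elements `S_ij(a) = [ε⁻¹X_il(a), ε⁻¹X_lj(1)]` (for any `l ∈ Ω ∖ {±i, ±j}`) are
well defined (independent of `l`), additive (`S_ij(a)·S_ij(b) = S_ij(a+b)`), and
satisfy `S_ij(a) = S_{−j,−i}(ε_{−j}·ā·ε_i)`. -/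
theorem S_additive_and_symmetric (f : AntiHermitianForm R pi V)
    (L : OddFormParameter f) (n : ℕ∞) (hn : 4 ≤ n)
    {G : Type u} [Group G] (S : StURels n f L G) (hS : IsStU S)
    {H : Type u} [Group H] (ε : H →* G) (hε : IsCentralExtension ε)
    (hdag : DaggerProp S ε) :
    ∀ i j : ℤ, i ∈ Omega n → j ∈ Omega n → j ≠ i → j ≠ -i →
      (∀ l l' : ℤ, l ∈ Omega n → l' ∈ Omega n →
        l ≠ i → l ≠ -i → l ≠ j → l ≠ -j → l' ≠ i → l' ≠ -i → l' ≠ j → l' ≠ -j →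
        ∀ a : R, ∀ u v u' v' : H,
          ε u = S.X i l a → ε v = S.X l j 1 →
          ε u' = S.X i l' a → ε v' = S.X l' j 1 →
          ⁅u, v⁆ = ⁅u', v'⁆) ∧
      (∀ l : ℤ, l ∈ Omega n → l ≠ i → l ≠ -i → l ≠ j → l ≠ -j →
        ∀ a b : R, ∀ ua va ub vb uc vc : H,
          ε ua = S.X i l a → ε va = S.X l j 1 →
          ε ub = S.X i l b → ε vb = S.X l j 1 →
          ε uc = S.X i l (a + b) → ε vc = S.X l j 1 →
          ⁅ua, va⁆ * ⁅ub, vb⁆ = ⁅uc, vc⁆) ∧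
      (∀ l m : ℤ, l ∈ Omega n → m ∈ Omega n →
        l ≠ i → l ≠ -i → l ≠ j → l ≠ -j → m ≠ i → m ≠ -i → m ≠ j → m ≠ -j →
        ∀ a : R, ∀ u v u' v' : H,
          ε u = S.X i l a → ε v = S.X l j 1 →
          ε u' = S.X (-j) m (epsI pi (-j) * pi.bar a * epsI pi i) →
          ε v' = S.X m (-i) 1 →
          ⁅u, v⁆ = ⁅u', v'⁆) :=
  S_additive_and_symmetric_general f L n hn S ε hε hdag
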